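/- arXiv:1711.01086 — 3 statements merged into one kernel-verified Lean document; each statement's English description precedes it below -/
import Mathlib

section
/- For every n ≥ 3, the path P_n satisfies η_p(P_n) = 3. -/
open SimpleGraph Set

/-- Distance from a vertex to a set of vertices. -/
noncomputable def pDist {V : Type*} (G : SimpleGraph V) (v : V) (S : Set V) : ℕ :=
  sInf (G.dist v '' S)

/-- A family of sets of vertices is resolving if every pair of distinct vertices
is distinguished by its distance to some part. -/
def IsResolvingFam {V : Type*} (G : SimpleGraph V) (P : Set (Set V)) : Prop :=
  ∀ u v : V, u ≠ v → ∃ S ∈ P, pDist G u S ≠ pDist G v S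

/-- A family of sets is dominating if every vertex is at distance exactly 1 from some part. -/
def IsDominatingFam {V : Type*} (G : SimpleGraph V) (P : Set (Set V)) : Prop :=
  ∀ v : V, ∃ S ∈ P, pDist G v S = 1

/-- The partition domination number: minimum cardinality of a dominating partition. -/
noncomputable def gammaP {V : Type*} (G : SimpleGraph V) : ℕ :=
  sInf {k | ∃ P : Set (Set V), Setoid.IsPartition P ∧ IsDominatingFam G P ∧ P.ncard = k}

/-- The partition dimension: minimum cardinality of a resolving partition. -/
noncomputable def betaP {V : Type*} (G : SimpleGraph V) : ℕ :=
  sInf {k | ∃ P : Set (Set V), Setoid.IsPartition P ∧ IsResolvingFam G P ∧ P.ncard = k}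

/-- The dominating partition dimension: minimum cardinality of a resolving dominating partition. -/
noncomputable def etaP {V : Type*} (G : SimpleGraph V) : ℕ :=
  sInf {k | ∃ P : Set (Set V), Setoid.IsPartition P ∧ IsResolvingFam G P ∧
    IsDominatingFam G P ∧ P.ncard = k}

/-- A resolving set of vertices. -/
def IsResolvingSet {V : Type*} (G : SimpleGraph V) (S : Set V) : Prop :=
  ∀ u v : V, u ≠ v → ∃ x ∈ S, G.dist u x ≠ G.dist v x

/-- A dominating set of vertices. -/
def IsDominatingSet {V : Type*} (G : SimpleGraph V) (S : Set V) : Prop :=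
  ∀ v : V, v ∉ S → ∃ u ∈ S, G.Adj u v

/-- The resolving domination number η(G). -/
noncomputable def etaNum {V : Type*} (G : SimpleGraph V) : ℕ :=
  sInf {k | ∃ S : Set V, IsResolvingSet G S ∧ IsDominatingSet G S ∧ S.ncard = k}

/-- A twin set: pairwise twin vertices. -/
def IsTwinSet {V : Type*} (G : SimpleGraph V) (W : Set V) : Prop :=
  ∀ u ∈ W, ∀ v ∈ W, ∀ w : V, w ≠ u → w ≠ v → G.dist u w = G.dist v w

/-- The join of two graphs. -/
def gJoin {α β : Type*} (G : SimpleGraph α) (H : SimpleGraph β) : SimpleGraph (α ⊕ β) :=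
  SimpleGraph.fromRel (fun x y =>
    (∃ a b, x = Sum.inl a ∧ y = Sum.inl b ∧ G.Adj a b) ∨
    (∃ a b, x = Sum.inr a ∧ y = Sum.inr b ∧ H.Adj a b) ∨
    (∃ a b, x = Sum.inl a ∧ y = Sum.inr b))

/-- The disjoint union of two graphs. -/
def gUnion {α β : Type*} (G : SimpleGraph α) (H : SimpleGraph β) : SimpleGraph (α ⊕ β) :=
  SimpleGraph.fromRel (fun x y =>
    (∃ a b, x = Sum.inl a ∧ y = Sum.inl b ∧ G.Adj a b) ∨
    (∃ a b, x = Sum.inr a ∧ y = Sum.inr b ∧ H.Adj a b))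

section Aux

private lemma path_conn {n : ℕ} (hn : 3 ≤ n) : (SimpleGraph.pathGraph n).Connected := by
  obtain ⟨m, rfl⟩ : ∃ m, n = m + 1 := ⟨n - 1, by omega⟩
  exact SimpleGraph.pathGraph_connected m

private lemma walk_len_lb {n : ℕ} : ∀ {u v : Fin n} (w : (SimpleGraph.pathGraph n).Walk u v),
    v.val ≤ u.val + w.length ∧ u.val ≤ v.val + w.length := by
  intro u v w
  induction w with
  | nil => simp
  | cons h p ih =>
    rw [SimpleGraph.pathGraph_adj] at h
    simp only [SimpleGraph.Walk.length_cons]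
    rcases h with h | h <;> omega

private lemma dist_zero_le {n : ℕ} (hn : 3 ≤ n) : ∀ (k : ℕ) (h : k < n),
    (SimpleGraph.pathGraph n).dist ⟨k, h⟩ ⟨0, by omega⟩ ≤ k := by
  intro k
  induction k with
  | zero => intro h; simp [SimpleGraph.dist_self]
  | succ m ih =>
    intro h
    have hadj : (SimpleGraph.pathGraph n).Adj ⟨m + 1, h⟩ ⟨m, by omega⟩ := by
      rw [SimpleGraph.pathGraph_adj]; right; simp
    have h1 : (SimpleGraph.pathGraph n).dist ⟨m + 1, h⟩ ⟨m, by omega⟩ = 1 :=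
      SimpleGraph.dist_eq_one_iff_adj.mpr hadj
    calc (SimpleGraph.pathGraph n).dist ⟨m + 1, h⟩ ⟨0, by omega⟩
        ≤ (SimpleGraph.pathGraph n).dist ⟨m + 1, h⟩ ⟨m, by omega⟩ +
          (SimpleGraph.pathGraph n).dist ⟨m, by omega⟩ ⟨0, by omega⟩ :=
          (path_conn hn).dist_triangle
      _ ≤ 1 + m := by have := ih (by omega); omega
      _ = m + 1 := by omega

private lemma path_dist_zero {n : ℕ} (hn : 3 ≤ n) (v : Fin n) :
    (SimpleGraph.pathGraph n).dist v ⟨0, by omega⟩ = v.val := by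
  apply le_antisymm
  · exact dist_zero_le hn v.val v.isLt
  · obtain ⟨w, hw⟩ := (path_conn hn).exists_walk_length_eq_dist v ⟨0, by omega⟩
    have := walk_len_lb w
    simp only [hw] at this
    omega

private lemma pDist_self {V : Type*} (G : SimpleGraph V) {v : V} {S : Set V} (h : v ∈ S) :
    pDist G v S = 0 :=
  Nat.sInf_eq_zero.mpr (Or.inl ⟨v, h, SimpleGraph.dist_self⟩)

private lemma pDist_singleton {V : Type*} (G : SimpleGraph V) (v z : V) :
    pDist G v {z} = G.dist v z := by
  simp [pDist]

private lemma pDist_eq_one {V : Type*} {G : SimpleGraph V} (hc : G.Connected) {v : V} {S : Set V}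
    (hv : v ∉ S) {s : V} (hs : s ∈ S) (hadj : G.Adj v s) : pDist G v S = 1 := by
  unfold pDist
  apply le_antisymm
  · exact Nat.sInf_le ⟨s, hs, SimpleGraph.dist_eq_one_iff_adj.mpr hadj⟩
  · refine le_csInf ⟨G.dist v s, ⟨s, hs, rfl⟩⟩ ?_
    rintro _ ⟨t, ht, rfl⟩
    exact hc.pos_dist_of_ne (fun h => hv (h ▸ ht))

private lemma two_part_contra {V : Type*} (G : SimpleGraph V) {A B : Set V}
    (hres : IsResolvingFam G {A, B}) (hdom : IsDominatingFam G {A, B})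
    {u v : V} (huv : u ≠ v) (hu : u ∈ A) (hv : v ∈ A) : False := by
  have h0u := pDist_self G hu
  have h0v := pDist_self G hv
  have h1u : pDist G u B = 1 := by
    obtain ⟨S, hS, h1⟩ := hdom u
    simp only [Set.mem_insert_iff, Set.mem_singleton_iff] at hS
    rcases hS with rfl | rfl
    · omega
    · exact h1
  have h1v : pDist G v B = 1 := by
    obtain ⟨S, hS, h1⟩ := hdom v
    simp only [Set.mem_insert_iff, Set.mem_singleton_iff] at hS
    rcases hS with rfl | rfl
    · omega
    · exact h1
  obtain ⟨S, hS, hne⟩ := hres u v huv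
  simp only [Set.mem_insert_iff, Set.mem_singleton_iff] at hS
  rcases hS with rfl | rfl
  · omega
  · omega

end Aux

theorem stmt_2 (n : ℕ) (hn : 3 ≤ n) : etaP (SimpleGraph.pathGraph n) = 3 := by
  have hc := path_conn hn
  set G := SimpleGraph.pathGraph n with hG
  have hz0 : 0 < n := by omega
  have hz1 : 1 < n := by omega
  have hz2 : 2 < n := by omega
  set z0 : Fin n := ⟨0, hz0⟩ with hzz0
  set z1 : Fin n := ⟨1, hz1⟩ with hzz1
  set z2 : Fin n := ⟨2, hz2⟩ with hzz2
  set A : Set (Fin n) := {z0} with hA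
  set B : Set (Fin n) := {v : Fin n | v.val % 2 = 1} with hB
  set C : Set (Fin n) := {v : Fin n | v.val ≠ 0 ∧ v.val % 2 = 0} with hC
  have hz0A : z0 ∈ A := rfl
  have hz1B : z1 ∈ B := by show (1 : ℕ) % 2 = 1; norm_num
  have hz2C : z2 ∈ C := by constructor <;> norm_num
  have hz0B : z0 ∉ B := by show ¬ ((0 : ℕ) % 2 = 1); norm_num
  have hz0C : z0 ∉ C := fun h => h.1 rfl
  have hz1C : z1 ∉ C := fun h => by have := h.2; norm_num at this
  -- the partition
  have hpart : Setoid.IsPartition ({A, B, C} : Set (Set (Fin n))) := by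
    constructor
    · intro hmem
      simp only [Set.mem_insert_iff, Set.mem_singleton_iff] at hmem
      rcases hmem with h | h | h
      · rw [← h] at hz0A; exact absurd hz0A (Set.notMem_empty _)
      · rw [← h] at hz1B; exact absurd hz1B (Set.notMem_empty _)
      · rw [← h] at hz2C; exact absurd hz2C (Set.notMem_empty _)
    · intro a
      by_cases h0 : a.val = 0
      · refine ⟨A, ⟨by simp, by rw [hA, Set.mem_singleton_iff, Fin.ext_iff]; exact h0⟩, ?_⟩
        rintro X ⟨hX, haX⟩
        simp only [Set.mem_insert_iff, Set.mem_singleton_iff] at hX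
        rcases hX with rfl | rfl | rfl
        · rfl
        · rw [hB, Set.mem_setOf_eq] at haX; omega
        · exact absurd h0 haX.1
      · by_cases h1 : a.val % 2 = 1
        · refine ⟨B, ⟨by simp, h1⟩, ?_⟩
          rintro X ⟨hX, haX⟩
          simp only [Set.mem_insert_iff, Set.mem_singleton_iff] at hX
          rcases hX with rfl | rfl | rfl
          · rw [hA, Set.mem_singleton_iff, Fin.ext_iff] at haX; exact absurd haX h0
          · rfl
          · have := haX.2; omega
        · refine ⟨C, ⟨by simp, h0, by omega⟩, ?_⟩
          rintro X ⟨hX, haX⟩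
          simp only [Set.mem_insert_iff, Set.mem_singleton_iff] at hX
          rcases hX with rfl | rfl | rfl
          · rw [hA, Set.mem_singleton_iff, Fin.ext_iff] at haX; exact absurd haX h0
          · rw [hB, Set.mem_setOf_eq] at haX; exact absurd haX h1
          · rfl
  -- resolving
  have hres : IsResolvingFam G ({A, B, C} : Set (Set (Fin n))) := by
    intro u v huv
    refine ⟨A, by simp, ?_⟩
    rw [hA, pDist_singleton, pDist_singleton, hzz0]
    rw [path_dist_zero hn u, path_dist_zero hn v]
    exact fun h => huv (Fin.ext h)
  -- dominating
  have hdom : IsDominatingFam G ({A, B, C} : Set (Set (Fin n))) := by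
    intro v
    by_cases h0 : v.val = 0
    · refine ⟨B, by simp, pDist_eq_one hc ?_ hz1B ?_⟩
      · rw [hB, Set.mem_setOf_eq]; omega
      · rw [hG, SimpleGraph.pathGraph_adj]; left; show v.val + 1 = 1; omega
    · by_cases h1 : v.val % 2 = 1
      · by_cases h11 : v.val = 1
        · refine ⟨A, by simp, pDist_eq_one hc ?_ hz0A ?_⟩
          · rw [hA, Set.mem_singleton_iff, Fin.ext_iff]; show ¬ v.val = 0; omega
          · rw [hG, SimpleGraph.pathGraph_adj]; right; show (0 : ℕ) + 1 = v.val; omega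
        · have h3 : 3 ≤ v.val := by omega
          refine ⟨C, by simp, pDist_eq_one hc ?_ (s := ⟨v.val - 1, by omega⟩) ⟨show v.val - 1 ≠ 0 by omega, show (v.val - 1) % 2 = 0 by omega⟩ ?_⟩
          · rw [hC, Set.mem_setOf_eq]; omega
          · rw [hG, SimpleGraph.pathGraph_adj]; right; show (v.val - 1) + 1 = v.val; omega
      · have h2 : 2 ≤ v.val := by omega
        refine ⟨B, by simp, pDist_eq_one hc ?_ (s := ⟨v.val - 1, by omega⟩) (show (v.val - 1) % 2 = 1 by omega) ?_⟩
        · rw [hB, Set.mem_setOf_eq]; omega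
        · rw [hG, SimpleGraph.pathGraph_adj]; right; show (v.val - 1) + 1 = v.val; omega
  -- cardinality 3
  have hAB : A ≠ B := fun h => hz0B (h ▸ hz0A)
  have hAC : A ≠ C := fun h => hz0C (h ▸ hz0A)
  have hBC : B ≠ C := fun h => hz1C (h ▸ hz1B)
  have hcard : ({A, B, C} : Set (Set (Fin n))).ncard = 3 :=
    Set.ncard_eq_three.mpr ⟨A, B, C, hAB, hAC, hBC, rfl⟩
  have h3 : 3 ∈ {k | ∃ P : Set (Set (Fin n)), Setoid.IsPartition P ∧ IsResolvingFam G P ∧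
      IsDominatingFam G P ∧ P.ncard = k} := ⟨{A, B, C}, hpart, hres, hdom, hcard⟩
  -- lower bound
  have hlb : ∀ k ∈ {k | ∃ P : Set (Set (Fin n)), Setoid.IsPartition P ∧ IsResolvingFam G P ∧
      IsDominatingFam G P ∧ P.ncard = k}, 3 ≤ k := by
    rintro k ⟨P, hPpart, hPres, hPdom, rfl⟩
    by_contra hk
    push_neg at hk
    have hfin : P.Finite := Set.toFinite P
    have hcases : P.ncard = 0 ∨ P.ncard = 1 ∨ P.ncard = 2 := by omega
    rcases hcases with h | h | h
    · have hPe : P = ∅ := (Set.ncard_eq_zero hfin).mp h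
      obtain ⟨b, ⟨hbP, _⟩, _⟩ := hPpart.2 z0
      rw [hPe] at hbP
      exact absurd hbP (Set.notMem_empty _)
    · obtain ⟨S, rfl⟩ := Set.ncard_eq_one.mp h
      obtain ⟨b, ⟨hbP, hzb⟩, _⟩ := hPpart.2 z0
      rw [Set.mem_singleton_iff] at hbP
      subst hbP
      obtain ⟨T, hT, h1⟩ := hPdom z0
      rw [Set.mem_singleton_iff] at hT
      subst hT
      rw [pDist_self _ hzb] at h1
      exact absurd h1 (by omega)
    · obtain ⟨X, Y, hXY, rfl⟩ := Set.ncard_eq_two.mp h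
      have hm : ∀ a : Fin n, a ∈ X ∨ a ∈ Y := by
        intro a
        obtain ⟨b, ⟨hbP, hab⟩, _⟩ := hPpart.2 a
        simp only [Set.mem_insert_iff, Set.mem_singleton_iff] at hbP
        rcases hbP with rfl | rfl
        · exact Or.inl hab
        · exact Or.inr hab
      have hresYX : IsResolvingFam G {Y, X} := by rwa [Set.pair_comm]
      have hdomYX : IsDominatingFam G {Y, X} := by rwa [Set.pair_comm]
      have h01 : z0 ≠ z1 := by rw [hzz0, hzz1]; simp [Fin.ext_iff]
      have h02 : z0 ≠ z2 := by rw [hzz0, hzz2]; simp [Fin.ext_iff]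
      have h12 : z1 ≠ z2 := by rw [hzz1, hzz2]; simp [Fin.ext_iff]
      rcases hm z0 with h0 | h0 <;> rcases hm z1 with h1 | h1 <;> rcases hm z2 with h2 | h2
      · exact two_part_contra G hPres hPdom h01 h0 h1
      · exact two_part_contra G hPres hPdom h01 h0 h1
      · exact two_part_contra G hPres hPdom h02 h0 h2
      · exact two_part_contra G hresYX hdomYX h12 h1 h2
      · exact two_part_contra G hPres hPdom h12 h1 h2
      · exact two_part_contra G hresYX hdomYX h02 h0 h2
      · exact two_part_contra G hresYX hdomYX h01 h0 h1
      · exact two_part_contra G hresYX hdomYX h01 h0 h1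
  rw [etaP]
  exact le_antisymm (Nat.sInf_le h3) (le_csInf ⟨3, h3⟩ hlb)
end

section
/- Let G be a connected graph of order n ≥ 3 and let W ⊊ V(G) be a twin set of cardinality k ≥ 2 inducing a complete graph. Then β_p(G) ≥ k + 1. -/
open SimpleGraph Set

lemma pDist_le_of_mem {V : Type*} (G : SimpleGraph V) {v w : V} {S : Set V} (hw : w ∈ S) :
    pDist G v S ≤ G.dist v w :=
  Nat.sInf_le ⟨w, hw, rfl⟩

lemma pDist_eq_zero_of_mem {V : Type*} (G : SimpleGraph V) {v : V} {S : Set V} (hv : v ∈ S) :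
    pDist G v S = 0 := by
  have h := pDist_le_of_mem G (v := v) hv
  rw [SimpleGraph.dist_self] at h
  omega

lemma pDist_ne_zero {V : Type*} {G : SimpleGraph V} (hG : G.Connected) {v : V} {S : Set V}
    (hS : S.Nonempty) (hv : v ∉ S) : pDist G v S ≠ 0 := by
  intro h
  rcases Nat.sInf_eq_zero.mp h with h0 | hemp
  · obtain ⟨w, hw, hd⟩ := h0
    exact hv ((hG.dist_eq_zero_iff.mp hd) ▸ hw)
  · exact hS.ne_empty (Set.image_eq_empty.mp hemp)

lemma cross_edge {V : Type*} {G : SimpleGraph V} {W : Set V} :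
    ∀ {a b : V}, G.Walk a b → a ∈ W → b ∉ W → ∃ u ∈ W, ∃ x, x ∉ W ∧ G.Adj u x := by
  intro a b p
  induction p with
  | nil => intro ha hb; exact absurd ha hb
  | @cons a c b h p ih =>
    intro ha hb
    by_cases hc : c ∈ W
    · exact ih hc hb
    · exact ⟨a, ha, c, hc, h⟩

theorem stmt_6 {V : Type*} [Fintype V] (G : SimpleGraph V) (hG : G.Connected)
    (hn : 3 ≤ Fintype.card V) (W : Set V) (hW : W ≠ Set.univ) (hTwin : IsTwinSet G W)
    (k : ℕ) (hk : 2 ≤ k) (hcard : W.ncard = k)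
    (hComplete : ∀ u ∈ W, ∀ v ∈ W, u ≠ v → G.Adj u v) :
    k + 1 ≤ betaP G := by
  classical
  apply le_csInf
  · -- the singleton partition is resolving
    refine ⟨Fintype.card V, Set.range (fun v : V => ({v} : Set V)), ?_, ?_, ?_⟩
    · constructor
      · rintro ⟨v, hv⟩
        simp at hv
      · intro a
        refine ⟨{a}, ⟨⟨a, rfl⟩, rfl⟩, ?_⟩
        rintro S ⟨⟨v, rfl⟩, ha⟩
        simp_all
    · intro u v huv
      refine ⟨{u}, ⟨u, rfl⟩, ?_⟩
      rw [pDist_eq_zero_of_mem G (Set.mem_singleton u)]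
      exact (pDist_ne_zero hG ⟨u, Set.mem_singleton u⟩ (by simpa using huv.symm)).symm
    · rw [← Set.image_univ, Set.ncard_image_of_injective _ (fun a b h => by simpa using h),
        Set.ncard_univ, Nat.card_eq_fintype_card]
  · rintro m ⟨P, hP, hres, rfl⟩
    have hWfin : W.Finite := Set.toFinite W
    have hPfin : P.Finite := Set.toFinite P
    -- the part containing a vertex
    have hchoice : ∀ a : V, ∃ S, S ∈ P ∧ a ∈ S := fun a => (hP.2 a).exists
    set f : V → Set V := fun a => (hchoice a).choose with hf
    have hfP : ∀ a, f a ∈ P := fun a => (hchoice a).choose_spec.1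
    have hfm : ∀ a, a ∈ f a := fun a => (hchoice a).choose_spec.2
    have huniq : ∀ (a : V) (S T : Set V), S ∈ P → T ∈ P → a ∈ S → a ∈ T → S = T :=
      fun a S T hS hT haS haT => (hP.2 a).unique ⟨hS, haS⟩ ⟨hT, haT⟩
    have hnotmem : ∀ (a : V) (T : Set V), T ∈ P → T ≠ f a → a ∉ T :=
      fun a T hT hne ha => hne (huniq a T (f a) hT (hfP a) ha (hfm a))
    -- twins in the same part are not resolved
    have hsame : ∀ u ∈ W, ∀ v ∈ W, u ≠ v → f u ≠ f v := by
      intro u hu v hv huv heq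
      obtain ⟨T, hT, hne⟩ := hres u v huv
      apply hne
      by_cases hTu : T = f u
      · rw [hTu, pDist_eq_zero_of_mem G (hfm u), pDist_eq_zero_of_mem G (heq ▸ hfm v)]
      · have hu' : u ∉ T := hnotmem u T hT hTu
        have hv' : v ∉ T := hnotmem v T hT (heq ▸ hTu)
        unfold pDist
        congr 1
        apply Set.image_congr
        intro w hw
        exact hTwin u hu v hv w (fun h => hu' (h ▸ hw)) (fun h => hv' (h ▸ hw))
    have hinj : Set.InjOn f W := by
      intro u hu v hv heq
      by_contra hne
      exact hsame u hu v hv hne heq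
    have hsub : f '' W ⊆ P := by rintro S ⟨a, _, rfl⟩; exact hfP a
    have hkle : k ≤ P.ncard := by
      rw [← hcard, ← Set.ncard_image_of_injOn hinj]
      exact Set.ncard_le_ncard hsub hPfin
    rcases Nat.lt_or_ge k P.ncard with h | h
    · omega
    exfalso
    -- now P.ncard = k; each part contains exactly one twin
    have heq : f '' W = P := Set.eq_of_subset_of_ncard_le hsub
      (by rw [Set.ncard_image_of_injOn hinj, hcard]; omega) hPfin
    -- find x outside W adjacent to some u₀ ∈ W
    have hWne : W.Nonempty := Set.nonempty_of_ncard_ne_zero (by omega)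
    obtain ⟨a, ha⟩ := hWne
    obtain ⟨y, hy⟩ := Set.ne_univ_iff_exists_notMem W |>.mp hW
    obtain ⟨u₀, hu₀, x, hx, hadj⟩ := cross_edge (hG.preconnected a y).some ha hy
    -- the part of x is the part of some twin uᵢ
    obtain ⟨ui, hui, hfx⟩ : ∃ ui ∈ W, f ui = f x := by
      have : f x ∈ f '' W := heq ▸ hfP x
      obtain ⟨ui, hui, h'⟩ := this
      exact ⟨ui, hui, h'⟩
    have hxui : x ≠ ui := fun h => hx (h ▸ hui)
    obtain ⟨T, hT, hne⟩ := hres x ui hxui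
    apply hne
    obtain ⟨uj, huj, rfl⟩ : ∃ uj ∈ W, f uj = T := by
      have : T ∈ f '' W := heq ▸ hT
      obtain ⟨uj, huj, h'⟩ := this
      exact ⟨uj, huj, h'⟩
    by_cases hTx : f uj = f x
    · rw [hTx, pDist_eq_zero_of_mem G (hfm x), pDist_eq_zero_of_mem G (hfx ▸ hfm ui)]
    · have hji : ui ≠ uj := fun h => hTx (h ▸ hfx)
      have hxT : x ∉ f uj := hnotmem x (f uj) hT hTx
      have huiT : ui ∉ f uj := hnotmem ui (f uj) hT (fun h => hTx (hfx ▸ h))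
      have hTne : (f uj).Nonempty := ⟨uj, hfm uj⟩
      -- pDist ui (f uj) = 1
      have h1 : pDist G ui (f uj) = 1 := by
        have hle : pDist G ui (f uj) ≤ 1 := by
          have := pDist_le_of_mem G (v := ui) (hfm uj)
          rwa [SimpleGraph.dist_eq_one_iff_adj.mpr (hComplete ui hui uj huj hji)] at this
        have := pDist_ne_zero hG hTne huiT
        omega
      -- pDist x (f uj) = 1
      have h2 : pDist G x (f uj) = 1 := by
        have hdx : G.dist x uj = 1 := by
          rw [SimpleGraph.dist_comm]
          have ht := hTwin uj huj u₀ hu₀ x (fun h => hx (h ▸ huj)) (fun h => hx (h ▸ hu₀))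
          rw [ht, SimpleGraph.dist_comm, SimpleGraph.dist_eq_one_iff_adj]
          exact hadj.symm
        have hle : pDist G x (f uj) ≤ 1 := by
          have := pDist_le_of_mem G (v := x) (hfm uj)
          rwa [hdx] at this
        have := pDist_ne_zero hG hTne hxT
        omega
      rw [h1, h2]
end

section
/- For any connected graph G of order n ≥ 3, β_p(G) ≤ η_p(G) ≤ β_p(G) + 1. -/
open SimpleGraph Set

section Helpers

variable {V : Type*} {G : SimpleGraph V}

lemma pdist_le_dist {S : Set V} {x : V} (v : V) (hx : x ∈ S) : pDist G v S ≤ G.dist v x :=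
  Nat.sInf_le ⟨x, hx, rfl⟩

lemma pdist_eq_zero_of_mem {S : Set V} {v : V} (hv : v ∈ S) : pDist G v S = 0 :=
  Nat.le_antisymm (by have h := pdist_le_dist (G := G) v hv; rwa [SimpleGraph.dist_self] at h) (Nat.zero_le _)

lemma exists_pdist_eq {S : Set V} (v : V) (hS : S.Nonempty) :
    ∃ x ∈ S, pDist G v S = G.dist v x := by
  obtain ⟨x, hx, he⟩ := Nat.sInf_mem (show (G.dist v '' S).Nonempty from hS.image (G.dist v))
  exact ⟨x, hx, he.symm⟩

lemma one_le_pdist (hG : G.Connected) {S : Set V} {v : V} (hv : v ∉ S) (hS : S.Nonempty) :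
    1 ≤ pDist G v S := by
  obtain ⟨x, hx, he⟩ := exists_pdist_eq v hS
  rw [he]
  exact hG.pos_dist_of_ne (fun h => hv (h ▸ hx))

lemma pdist_eq_one_of_adj (hG : G.Connected) {S : Set V} {v x : V} (hv : v ∉ S) (hx : x ∈ S)
    (ha : G.Adj v x) : pDist G v S = 1 := by
  refine le_antisymm ?_ (one_le_pdist hG hv ⟨x, hx⟩)
  have h := pdist_le_dist (G := G) v hx
  rwa [SimpleGraph.dist_eq_one_iff_adj.mpr ha] at h

lemma pdist_anti {S S' : Set V} {v : V} (hsub : S' ⊆ S) (hS' : S'.Nonempty) :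
    pDist G v S ≤ pDist G v S' := by
  obtain ⟨x, hx, he⟩ := exists_pdist_eq v hS'
  rw [he]; exact pdist_le_dist v (hsub hx)

lemma exists_adj_dist_lt (hG : G.Connected) {x w : V} (h : x ≠ w) :
    ∃ y, G.Adj w y ∧ G.dist x y < G.dist x w := by
  obtain ⟨p, hp⟩ := hG.exists_walk_length_eq_dist w x
  cases p with
  | nil => exact absurd rfl h
  | @cons _ y _ a q =>
      refine ⟨y, a, ?_⟩
      have h1 : G.dist x y ≤ q.length := by
        rw [SimpleGraph.dist_comm]; exact SimpleGraph.dist_le q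
      have h2 : q.length + 1 = G.dist x w := by
        rw [SimpleGraph.dist_comm]; simpa using hp
      omega

lemma exists_adj_self [Fintype V] (hG : G.Connected) (hcard : 1 < Fintype.card V) (v : V) :
    ∃ u, G.Adj v u := by
  obtain ⟨w, hw⟩ := Fintype.exists_ne_of_one_lt_card hcard v
  obtain ⟨y, hy, _⟩ := exists_adj_dist_lt hG hw
  exact ⟨y, hy⟩

lemma pdist_diff (hG : G.Connected) {S A : Set V} {x : V}
    (hS : S.Nonempty) (hx : x ∉ S ∩ A)
    (hA : ∀ a ∈ S ∩ A, ∀ y, G.Adj a y → y ∈ S \ A) :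
    pDist G x (S \ A) = pDist G x S := by
  obtain ⟨w, hw, he⟩ := exists_pdist_eq x hS
  by_cases hwA : w ∈ A
  · have hxw : x ≠ w := fun h => hx (h ▸ ⟨hw, hwA⟩)
    obtain ⟨y, hy, hlt⟩ := exists_adj_dist_lt hG hxw
    have hyS : y ∈ S \ A := hA w ⟨hw, hwA⟩ y hy
    refine le_antisymm ?_ (pdist_anti diff_subset ⟨y, hyS⟩)
    calc pDist G x (S \ A) ≤ G.dist x y := pdist_le_dist x hyS
      _ ≤ G.dist x w := le_of_lt hlt
      _ = pDist G x S := he.symm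
  · refine le_antisymm ?_ (pdist_anti diff_subset ⟨w, hw, hwA⟩)
    rw [he]; exact pdist_le_dist x ⟨hw, hwA⟩

lemma pdist_singleton (v x : V) : pDist G v {x} = G.dist v x := by
  simp [pDist, Set.image_singleton]

end Helpers

theorem stmt_9 {V : Type*} [Fintype V] (G : SimpleGraph V) (hG : G.Connected)
    (hn : 3 ≤ Fintype.card V) : betaP G ≤ etaP G ∧ etaP G ≤ betaP G + 1 := by
  classical
  have hcard : 1 < Fintype.card V := by omega
  have hadj : ∀ v : V, ∃ u, G.Adj v u := exists_adj_self hG hcard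
  -- the singleton partition
  set P₀ : Set (Set V) := Set.range (fun v : V => ({v} : Set V)) with hP₀def
  have hpart₀ : Setoid.IsPartition P₀ := by
    constructor
    · rintro ⟨v, hv⟩
      exact (Set.singleton_nonempty v).ne_empty hv
    · intro a
      refine ⟨{a}, ⟨⟨a, rfl⟩, rfl⟩, ?_⟩
      rintro S ⟨⟨v, rfl⟩, hav⟩
      simp_all
  have hres₀ : IsResolvingFam G P₀ := by
    intro u v huv
    refine ⟨{u}, ⟨u, rfl⟩, ?_⟩
    rw [pdist_singleton, pdist_singleton, SimpleGraph.dist_self]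
    exact fun h => (hG.pos_dist_of_ne (Ne.symm huv)).ne' h.symm
  have hdom₀ : IsDominatingFam G P₀ := by
    intro v
    obtain ⟨u, hu⟩ := hadj v
    exact ⟨{u}, ⟨u, rfl⟩, by rw [pdist_singleton]; exact SimpleGraph.dist_eq_one_iff_adj.mpr hu⟩
  -- nonemptiness of the defining sets
  have hEne : {k | ∃ P : Set (Set V), Setoid.IsPartition P ∧ IsResolvingFam G P ∧
      IsDominatingFam G P ∧ P.ncard = k}.Nonempty := ⟨P₀.ncard, P₀, hpart₀, hres₀, hdom₀, rfl⟩
  have hBne : {k | ∃ P : Set (Set V), Setoid.IsPartition P ∧ IsResolvingFam G P ∧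
      P.ncard = k}.Nonempty := ⟨P₀.ncard, P₀, hpart₀, hres₀, rfl⟩
  constructor
  · -- betaP ≤ etaP
    obtain ⟨P, hp1, hp2, _, hp4⟩ := Nat.sInf_mem hEne
    exact Nat.sInf_le ⟨P, hp1, hp2, hp4⟩
  · -- etaP ≤ betaP + 1
    obtain ⟨Q, hQpart, hQres, hQcard⟩ := Nat.sInf_mem hBne
    -- the set of vertices not dominated by Q
    set U : Set V := {v | ∀ T ∈ Q, pDist G v T ≠ 1} with hUdef
    -- membership in a part is unique
    have huniq : ∀ {v : V} {T T' : Set V}, T ∈ Q → T' ∈ Q → v ∈ T → v ∈ T' → T = T' := by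
      intro v T T' hT hT' hvT hvT'
      obtain ⟨b, _, hb⟩ := hQpart.2 v
      rw [hb T ⟨hT, hvT⟩, hb T' ⟨hT', hvT'⟩]
    have hQne : ∀ T ∈ Q, T.Nonempty := fun T hT =>
      Set.nonempty_iff_ne_empty.mpr (fun h => hQpart.1 (h ▸ hT))
    -- all neighbours of an undominated vertex lie in its own part
    have hUnbr : ∀ v ∈ U, ∀ T ∈ Q, v ∈ T → ∀ y, G.Adj v y → y ∈ T := by
      intro v hv T hT hvT y hy
      obtain ⟨Ty, ⟨hTy, hyTy⟩, _⟩ := hQpart.2 y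
      by_cases hvTy : v ∈ Ty
      · rwa [huniq hT hTy hvT hvTy]
      · exact absurd (pdist_eq_one_of_adj hG hvTy hyTy hy) (hv Ty hTy)
    by_cases hU : U = ∅
    · -- Q itself is dominating
      have hdom : IsDominatingFam G Q := by
        intro v
        have : v ∉ U := by rw [hU]; exact Set.notMem_empty v
        simp only [hUdef, Set.mem_setOf_eq, not_forall] at this
        obtain ⟨T, hT, hT1⟩ := this
        exact ⟨T, hT, not_not.mp hT1⟩
      have hbeta : Q.ncard = betaP G := hQcard
      have : etaP G ≤ Q.ncard := Nat.sInf_le ⟨Q, hQpart, hQres, hdom, rfl⟩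
      omega
    · -- take a maximal independent set A of G[U]
      obtain ⟨u₀, hu₀⟩ := Set.nonempty_iff_ne_empty.mpr hU
      set F : Set (Set V) := {B | B ⊆ U ∧ ∀ a ∈ B, ∀ b ∈ B, ¬ G.Adj a b} with hFdef
      have hFfin : F.Finite := Set.toFinite F
      have hFne : F.Nonempty := ⟨∅, Set.empty_subset _, by simp⟩
      obtain ⟨A, ⟨hAU, hAind⟩, hAmax⟩ := Set.Finite.exists_maximalFor id F hFfin hFne
      simp only [id] at hAmax
      -- every vertex of U outside A has a neighbour in A
      have hAdom : ∀ v ∈ U, v ∉ A → ∃ a ∈ A, G.Adj v a := by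
        intro v hvU hvA
        by_contra hc
        push_neg at hc
        have hBF : insert v A ∈ F := by
          refine ⟨Set.insert_subset hvU hAU, ?_⟩
          rintro a (rfl | ha) b (rfl | hb)
          · exact G.irrefl
          · exact hc b hb
          · exact fun h => hc a ha h.symm
          · exact hAind a ha b hb
        have := hAmax hBF (Set.subset_insert v A)
        exact hvA (this (Set.mem_insert v A))
      have hAne : A.Nonempty := by
        by_cases h : u₀ ∈ A
        · exact ⟨u₀, h⟩
        · obtain ⟨a, ha, _⟩ := hAdom u₀ hu₀ h
          exact ⟨a, ha⟩
      -- neighbours of vertices of A lie in their own part, outside A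
      have hAnbr : ∀ a ∈ A, ∀ T ∈ Q, a ∈ T → ∀ y, G.Adj a y → y ∈ T \ A := by
        intro a ha T hT haT y hy
        refine ⟨hUnbr a (hAU ha) T hT haT y hy, fun hyA => hAind a ha y hyA hy⟩
      -- each part minus A is nonempty
      have hdiffne : ∀ T ∈ Q, (T \ A).Nonempty := by
        intro T hT
        obtain ⟨x, hx⟩ := hQne T hT
        by_cases hxA : x ∈ A
        · obtain ⟨y, hy⟩ := hadj x
          exact ⟨y, hAnbr x hxA T hT hx y hy⟩
        · exact ⟨x, hx, hxA⟩
      -- the key distance-preservation lemma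
      have hstar : ∀ T ∈ Q, ∀ x, x ∉ T ∩ A → pDist G x (T \ A) = pDist G x T := by
        intro T hT x hx
        refine pdist_diff hG (hQne T hT) hx ?_
        intro a ha y hy
        exact hAnbr a ha.2 T hT ha.1 y hy
      -- A-vertices are at distance exactly 1 from their own part minus A
      have hAone : ∀ a ∈ A, ∀ T ∈ Q, a ∈ T → pDist G a (T \ A) = 1 := by
        intro a ha T hT haT
        obtain ⟨y, hy⟩ := hadj a
        exact pdist_eq_one_of_adj hG (fun h => h.2 ha) (hAnbr a ha T hT haT y hy) hy
      -- the refined partition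
      set Qd : Set (Set V) := insert A ((fun T => T \ A) '' Q) with hQddef
      have hmemA : A ∈ Qd := Set.mem_insert _ _
      have hmemdiff : ∀ T ∈ Q, T \ A ∈ Qd := fun T hT => Set.mem_insert_of_mem _ ⟨T, hT, rfl⟩
      have hpart' : Setoid.IsPartition Qd := by
        constructor
        · rintro (h | ⟨T, hT, h⟩)
          · exact hAne.ne_empty h.symm
          · exact (hdiffne T hT).ne_empty h
        · intro a
          by_cases haA : a ∈ A
          · refine ⟨A, ⟨hmemA, haA⟩, ?_⟩
            rintro S ⟨(rfl | ⟨T, hT, rfl⟩), haS⟩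
            · rfl
            · exact absurd haA haS.2
          · obtain ⟨T, ⟨hT, haT⟩, _⟩ := hQpart.2 a
            refine ⟨T \ A, ⟨hmemdiff T hT, haT, haA⟩, ?_⟩
            rintro S ⟨(rfl | ⟨T', hT', rfl⟩), haS⟩
            · exact absurd haS haA
            · rw [huniq hT' hT haS.1 haT]
      have hres' : IsResolvingFam G Qd := by
        intro u v huv
        obtain ⟨Tu, ⟨hTu, huTu⟩, _⟩ := hQpart.2 u
        obtain ⟨Tv, ⟨hTv, hvTv⟩, _⟩ := hQpart.2 v
        have hnotmem : ∀ {w : V} {T : Set V}, T ∈ Q → w ∈ Tu → T ≠ Tu → w ∉ T := by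
          intro w T hT hwTu hne hwT
          exact hne (huniq hT hTu hwT hwTu)
        by_cases huA : u ∈ A <;> by_cases hvA : v ∈ A
        · -- both in A
          by_cases hTT : Tu = Tv
          · obtain ⟨S, hS, hSne⟩ := hQres u v huv
            have huS : u ∉ S := by
              intro huS
              have hvS : v ∉ S := by
                intro hvS
                rw [pdist_eq_zero_of_mem huS, pdist_eq_zero_of_mem hvS] at hSne
                exact hSne rfl
              exact hvS (huniq hS hTu huS huTu ▸ hTT ▸ hvTv)
            have hvS : v ∉ S := by
              intro hvS
              exact huS (huniq hS hTv hvS hvTv ▸ hTT.symm ▸ huTu)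
            refine ⟨S \ A, hmemdiff S hS, ?_⟩
            rw [hstar S hS u (fun h => huS h.1), hstar S hS v (fun h => hvS h.1)]
            exact hSne
          · refine ⟨Tu \ A, hmemdiff Tu hTu, ?_⟩
            have h1 : pDist G u (Tu \ A) = 1 := hAone u huA Tu hTu huTu
            have hvTu : v ∉ Tu := fun h => hTT (huniq hTu hTv h hvTv)
            have h2 : pDist G v (Tu \ A) = pDist G v Tu :=
              hstar Tu hTu v (fun h => hvTu h.1)
            rw [h1, h2]
            exact fun h => (hAU hvA) Tu hTu h.symm
        · -- u ∈ A, v ∉ A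
          refine ⟨A, hmemA, ?_⟩
          rw [pdist_eq_zero_of_mem huA]
          exact fun h => absurd (h.symm) (Nat.one_le_iff_ne_zero.mp (one_le_pdist hG hvA hAne))
        · refine ⟨A, hmemA, ?_⟩
          rw [pdist_eq_zero_of_mem hvA]
          exact Nat.one_le_iff_ne_zero.mp (one_le_pdist hG huA hAne)
        · -- both outside A
          by_cases hTT : Tu = Tv
          · obtain ⟨S, hS, hSne⟩ := hQres u v huv
            refine ⟨S \ A, hmemdiff S hS, ?_⟩
            rw [hstar S hS u (fun h => huA h.2), hstar S hS v (fun h => hvA h.2)]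
            exact hSne
          · refine ⟨Tu \ A, hmemdiff Tu hTu, ?_⟩
            have hvTu : v ∉ Tu := fun h => hTT (huniq hTu hTv h hvTv)
            rw [pdist_eq_zero_of_mem (show u ∈ Tu \ A from ⟨huTu, huA⟩)]
            have hvd := one_le_pdist hG (fun hc => hvTu hc.1) (hdiffne Tu hTu)
            omega
      have hdom' : IsDominatingFam G Qd := by
        intro v
        by_cases hvU : v ∈ U
        · by_cases hvA : v ∈ A
          · obtain ⟨T, ⟨hT, hvT⟩, _⟩ := hQpart.2 v
            exact ⟨T \ A, hmemdiff T hT, hAone v hvA T hT hvT⟩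
          · obtain ⟨a, haA, hva⟩ := hAdom v hvU hvA
            exact ⟨A, hmemA, pdist_eq_one_of_adj hG hvA haA hva⟩
        · simp only [hUdef, Set.mem_setOf_eq, not_forall] at hvU
          obtain ⟨T, hT, hT1⟩ := hvU
          have hT1 : pDist G v T = 1 := not_not.mp hT1
          obtain ⟨w, hwT, hw⟩ := exists_pdist_eq v (hQne T hT)
          rw [hT1] at hw
          have hadjvw : G.Adj v w := SimpleGraph.dist_eq_one_iff_adj.mp hw.symm
          have hvT : v ∉ T := by
            intro h
            rw [pdist_eq_zero_of_mem h] at hT1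
            exact one_ne_zero hT1.symm
          have hwA : w ∉ A := by
            intro hwA
            exact hvT (hUnbr w (hAU hwA) T hT hwT v hadjvw.symm)
          exact ⟨T \ A, hmemdiff T hT,
            pdist_eq_one_of_adj hG (fun h => hvT h.1) ⟨hwT, hwA⟩ hadjvw⟩
      have hcard' : Qd.ncard ≤ Q.ncard + 1 := by
        calc Qd.ncard ≤ ((fun T => T \ A) '' Q).ncard + 1 := Set.ncard_insert_le _ _
          _ ≤ Q.ncard + 1 := by
              exact Nat.add_le_add_right (Set.ncard_image_le (Set.toFinite Q)) 1
      have hbeta : Q.ncard = betaP G := hQcard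
      have h1 : etaP G ≤ Qd.ncard := Nat.sInf_le ⟨Qd, hpart', hres', hdom', rfl⟩
      omega
end
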